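/- arXiv:2103.08495 — 3 statements merged into one kernel-verified Lean document; each statement's English description precedes it below -/
import Mathlib

section
/- Let T > 0, p ∈ [2, ∞), and γ > 0. For any μ ∈ L^p(0,T), the function t ↦ ‖μ‖_{L^2(0,t)} satisfies: the L^p(0,T)-norm of t ↦ e^{-γt}·‖μ‖_{L^2(0,t)} is at most C(p,T)·(pγ)^{-1/p}·‖e^{-γ·}μ‖_{L^p(0,T)}, where C(p,T) is a constant independent of γ and μ. In particular, for γ large enough this map is a contraction in the exponentially weighted L^p norm. -/
/-!
Hölder's inequality on `(0, t)` gives `(∫₀ᵗ μ²)^{p/2} ≤ t^{p/2-1} ∫₀ᵗ |μ|^p`, so the `p`-th power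
of the integrand on the left is at most `T^{p/2-1} e^{-γpt} B(t)`, where `B` is the primitive of
`|μ|^p`. Integrating by parts against `e^{-γpt}` gives
`∫₀ᵀ e^{-γpt} B = (γp)⁻¹ (∫₀ᵀ e^{-γpt} |μ|^p - e^{-γpT} B(T))`, and the boundary term has the
right sign. Taking `p`-th roots yields the estimate with `C = T^{(p/2-1)/p}`.
-/

open MeasureTheory Real Set

theorem integral_sq_rpow_le_measureReal_mul {α : Type*} [MeasurableSpace α] {ν : Measure α}
    [IsFiniteMeasure ν] {p : ℝ} (hp : 2 ≤ p) {f : α → ℝ} (hf : AEStronglyMeasurable f ν)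
    (hfp : Integrable (fun x => |f x| ^ p) ν) :
    (∫ x, f x ^ 2 ∂ν) ^ (p / 2) ≤ ν.real univ ^ (p / 2 - 1) * ∫ x, |f x| ^ p ∂ν := by
  have hp0 : 0 < p := by linarith
  have hfLp : MemLp f (ENNReal.ofReal p) ν :=
    (integrable_norm_rpow_iff hf (by simpa using hp0) ENNReal.ofReal_ne_top).1
      (by simpa [ENNReal.toReal_ofReal hp0.le] using hfp)
  have h2p : (2 : ENNReal) ≤ ENNReal.ofReal p := by simpa using ENNReal.ofReal_le_ofReal hp
  have hexp : (0 : ℝ) ≤ 1 / 2 - 1 / p := by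
    rw [sub_nonneg]; exact one_div_le_one_div_of_le two_pos hp
  have key := eLpNorm_le_eLpNorm_mul_rpow_measure_univ h2p hf
  rw [(hfLp.mono_exponent h2p).eLpNorm_eq_integral_rpow_norm two_ne_zero ENNReal.ofNat_ne_top,
    hfLp.eLpNorm_eq_integral_rpow_norm (by simpa using hp0) ENNReal.ofReal_ne_top,
    ← ofReal_measureReal, ENNReal.toReal_ofReal hp0.le, ENNReal.toReal_ofNat,
    ENNReal.ofReal_rpow_of_nonneg measureReal_nonneg hexp,
    ← ENNReal.ofReal_mul (by positivity), ENNReal.ofReal_le_ofReal_iff (by positivity)] at key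
  simp only [norm_eq_abs, sq_abs, Real.rpow_two] at key
  have hA : 0 ≤ ∫ x, f x ^ 2 ∂ν := integral_nonneg fun x => sq_nonneg _
  have hB : 0 ≤ ∫ x, |f x| ^ p ∂ν := integral_nonneg fun x => by positivity
  calc (∫ x, f x ^ 2 ∂ν) ^ (p / 2) = ((∫ x, f x ^ 2 ∂ν) ^ (2:ℝ)⁻¹) ^ p := by
        rw [← Real.rpow_mul hA]; ring_nf
    _ ≤ ((∫ x, |f x| ^ p ∂ν) ^ p⁻¹ * ν.real univ ^ (1 / 2 - 1 / p)) ^ p :=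
        Real.rpow_le_rpow (by positivity) key hp0.le
    _ = ν.real univ ^ (p / 2 - 1) * ∫ x, |f x| ^ p ∂ν := by
        rw [Real.mul_rpow (by positivity) (by positivity), ← Real.rpow_mul hB,
          ← Real.rpow_mul measureReal_nonneg, inv_mul_cancel₀ hp0.ne', Real.rpow_one, mul_comm]
        congr 2
        field_simp

theorem integral_exp_mul_primitive {g : ℝ → ℝ} {a b c : ℝ} (hc : c ≠ 0)
    (hg : IntervalIntegrable g volume a b) :
    ∫ t in a..b, exp (c * t) * ∫ τ in a..t, g τ
      = c⁻¹ * (exp (c * b) * (∫ τ in a..b, g τ) - ∫ t in a..b, exp (c * t) * g t) := by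
  have hG := hg.absolutelyContinuousOnInterval_intervalIntegral left_mem_uIcc
  have hE : AbsolutelyContinuousOnInterval (fun t => c⁻¹ * exp (c * t)) a b :=
    ContDiffOn.absolutelyContinuousOnInterval (by fun_prop)
  have hE' : deriv (fun t => c⁻¹ * exp (c * t)) = fun t => exp (c * t) := by
    funext t
    refine ((((hasDerivAt_id t).const_mul c).exp).const_mul c⁻¹).deriv.trans ?_
    simp only [id]; field_simp
  have hG' : ∀ᵐ t, t ∈ uIoc a b →
      deriv (fun x => ∫ τ in a..x, g τ) t * (c⁻¹ * exp (c * t)) = c⁻¹ * (exp (c * t) * g t) := by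
    filter_upwards [hg.ae_hasDerivAt_integral] with t ht htab
    rw [(ht (uIoc_subset_uIcc htab) a left_mem_uIcc).deriv]
    ring
  have ibp := hG.integral_mul_deriv_eq_deriv_mul hE
  rw [hE', intervalIntegral.integral_congr_ae hG', intervalIntegral.integral_const_mul,
    intervalIntegral.integral_same] at ibp
  simp_rw [mul_comm (exp _)] at ibp ⊢
  rw [ibp]
  ring

theorem setIntegral_exp_mul_primitive_le {g : ℝ → ℝ} {a b c : ℝ} (hab : a ≤ b) (hc : c < 0)
    (hg0 : ∀ t ∈ Ioc a b, 0 ≤ g t) (hg : IntegrableOn g (Ioc a b)) :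
    ∫ t in Ioc a b, exp (c * t) * ∫ τ in Ioc a t, g τ
      ≤ (-c)⁻¹ * ∫ t in Ioc a b, exp (c * t) * g t := by
  have hprim : ∫ t in Ioc a b, exp (c * t) * ∫ τ in Ioc a t, g τ
      = ∫ t in a..b, exp (c * t) * ∫ τ in a..t, g τ := by
    rw [intervalIntegral.integral_of_le hab]
    refine setIntegral_congr_fun measurableSet_Ioc fun t ht => ?_
    rw [intervalIntegral.integral_of_le ht.1.le]
  have hB : 0 ≤ exp (c * b) * ∫ τ in a..b, g τ := by
    rw [intervalIntegral.integral_of_le hab]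
    exact mul_nonneg (exp_pos _).le (setIntegral_nonneg measurableSet_Ioc hg0)
  have hboundary : c⁻¹ * (exp (c * b) * ∫ τ in a..b, g τ) ≤ 0 :=
    mul_nonpos_of_nonpos_of_nonneg (inv_nonpos.2 hc.le) hB
  rw [hprim, integral_exp_mul_primitive hc.ne
    ((intervalIntegrable_iff_integrableOn_Ioc_of_le hab).2 hg),
    ← intervalIntegral.integral_of_le hab, inv_neg]
  linarith

theorem exp_mul_sqrt_integral_sq_rpow_le {p γ t T : ℝ} (hp : 2 ≤ p) (ht : t ∈ Ioc 0 T)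
    {μ : ℝ → ℝ} (hμ : AEStronglyMeasurable μ (volume.restrict (Ioc 0 t)))
    (hμp : IntegrableOn (fun τ => |μ τ| ^ p) (Ioc 0 t)) :
    (exp (-γ * t) * (∫ τ in Ioc (0:ℝ) t, μ τ ^ 2) ^ ((1:ℝ) / 2)) ^ p
      ≤ T ^ (p / 2 - 1) * (exp (-γ * p * t) * ∫ τ in Ioc (0:ℝ) t, |μ τ| ^ p) := by
  have hA : 0 ≤ ∫ τ in Ioc (0:ℝ) t, μ τ ^ 2 := integral_nonneg fun τ => sq_nonneg _
  have holder := integral_sq_rpow_le_measureReal_mul hp hμ hμp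
  rw [measureReal_restrict_apply_univ, Real.volume_real_Ioc_of_le ht.1.le, sub_zero] at holder
  have htT : t ^ (p / 2 - 1) ≤ T ^ (p / 2 - 1) :=
    Real.rpow_le_rpow ht.1.le ht.2 (by linarith)
  calc (exp (-γ * t) * (∫ τ in Ioc (0:ℝ) t, μ τ ^ 2) ^ ((1:ℝ) / 2)) ^ p
      = exp (-γ * p * t) * (∫ τ in Ioc (0:ℝ) t, μ τ ^ 2) ^ (p / 2) := by
        rw [Real.mul_rpow (exp_pos _).le (by positivity), ← Real.exp_mul, ← Real.rpow_mul hA]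
        ring_nf
    _ ≤ exp (-γ * p * t) * (t ^ (p / 2 - 1) * ∫ τ in Ioc (0:ℝ) t, |μ τ| ^ p) := by gcongr
    _ ≤ exp (-γ * p * t) * (T ^ (p / 2 - 1) * ∫ τ in Ioc (0:ℝ) t, |μ τ| ^ p) := by gcongr
    _ = T ^ (p / 2 - 1) * (exp (-γ * p * t) * ∫ τ in Ioc (0:ℝ) t, |μ τ| ^ p) := by ring

/-- weighted `L^p` estimate for the Volterra map `μ ↦ ‖μ‖_{L²(0,t)}`:
there is `C = C(p,T)` (independent of `γ` and `μ`) with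
`‖e^{-γ·} ‖μ‖_{L²(0,·)}‖_{L^p(0,T)} ≤ C (pγ)^{-1/p} ‖e^{-γ·} μ‖_{L^p(0,T)}`. -/
theorem stmt0 (T p : ℝ) (hT : 0 < T) (hp : 2 ≤ p) :
    ∃ C : ℝ, 0 < C ∧ ∀ γ : ℝ, 0 < γ → ∀ μ : ℝ → ℝ, Measurable μ →
      IntegrableOn (fun t => |μ t| ^ p) (Ioc 0 T) →
      (∫ t in Ioc (0:ℝ) T,
          (Real.exp (-γ * t) * (∫ τ in Ioc (0:ℝ) t, (μ τ) ^ 2) ^ ((1:ℝ)/2)) ^ p) ^ ((1:ℝ)/p)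
        ≤ C * (p * γ) ^ (-(1:ℝ)/p) *
          (∫ t in Ioc (0:ℝ) T, Real.exp (-γ * p * t) * |μ t| ^ p) ^ ((1:ℝ)/p) := by
  have hp0 : 0 < p := by linarith
  refine ⟨T ^ ((p / 2 - 1) / p), by positivity, fun γ hγ μ hμ hμp => ?_⟩
  have hpt : ∀ t ∈ Ioc (0:ℝ) T,
      (exp (-γ * t) * (∫ τ in Ioc (0:ℝ) t, μ τ ^ 2) ^ ((1:ℝ) / 2)) ^ p
        ≤ T ^ (p / 2 - 1) * (exp (-γ * p * t) * ∫ τ in Ioc (0:ℝ) t, |μ τ| ^ p) :=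
    fun t ht => exp_mul_sqrt_integral_sq_rpow_le hp ht hμ.aestronglyMeasurable
      (hμp.mono_set (Ioc_subset_Ioc_right ht.2))
  have hmaj : IntegrableOn
      (fun t => exp (-γ * p * t) * ∫ τ in Ioc (0:ℝ) t, |μ τ| ^ p) (Ioc 0 T) :=
    (((continuous_exp.comp (continuous_const_mul _)).continuousOn.mul
      (intervalIntegral.continuousOn_primitive
        ((integrableOn_Icc_iff_integrableOn_Ioc).2 hμp))).integrableOn_Icc).mono_set
      Ioc_subset_Icc_self
  have hintegral : ∫ t in Ioc (0:ℝ) T,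
        (exp (-γ * t) * (∫ τ in Ioc (0:ℝ) t, μ τ ^ 2) ^ ((1:ℝ) / 2)) ^ p
      ≤ T ^ (p / 2 - 1) * ((p * γ)⁻¹ * ∫ t in Ioc (0:ℝ) T, exp (-γ * p * t) * |μ t| ^ p) := by
    refine (setIntegral_mono_of_nonneg (fun t _ => by positivity) hpt (hmaj.const_mul _)).trans ?_
    rw [integral_const_mul]
    gcongr
    refine (setIntegral_exp_mul_primitive_le hT.le (by nlinarith : -γ * p < 0)
      (fun t _ => by positivity) hμp).trans_eq ?_
    congr 1
    ring
  calc _ ≤ (T ^ (p / 2 - 1) * ((p * γ)⁻¹ * ∫ t in Ioc (0:ℝ) T, exp (-γ * p * t) * |μ t| ^ p))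
          ^ ((1:ℝ) / p) :=
        Real.rpow_le_rpow (setIntegral_nonneg measurableSet_Ioc fun t _ => by positivity) hintegral
          (by positivity)
    _ = _ := by
        rw [Real.mul_rpow (by positivity) (by positivity), Real.mul_rpow (by positivity)
          (setIntegral_nonneg measurableSet_Ioc fun t _ => by positivity), ← Real.rpow_mul hT.le,
          Real.inv_rpow (by positivity), ← Real.rpow_neg (by positivity), neg_div, mul_assoc,
          mul_one_div]
end

section
/- Let H be a Banach space, p ∈ [1,∞), T > 0, and C > 0. Suppose A : L^p(0,T) → L^p(0,T) satisfies |A f₁(t) − A f₂(t)| ≤ C·(∫₀ᵗ |f₁(τ) − f₂(τ)|² dτ)^{1/2} for a.e. t, for all f₁, f₂ ∈ L^p(0,T) with p ≥ 2. Then A has a unique fixed point in L^p(0,T). -/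
open MeasureTheory Real Set Filter Topology
open scoped Nat

/-!
The hypothesis on `A` is a Volterra-type Lipschitz bound, so it can be iterated as in Picard's
method for ODEs: if `u (n + 1) t ≤ C² ∫₀ᵗ u n` and `u 0 ≤ M` on `[0, T]`, then
`u n t ≤ M (C² t)ⁿ / n!`. The factor `1 / n!` does the job of the weight `e^{-γt}` in the
contraction argument. Applied to the squared differences of consecutive Picard iterates `Aⁿ 0`,
it makes them converge uniformly on `[0, T]` to an `L^p` function, which is a fixed point since
`A` is continuous along uniformly convergent sequences. Applied to the squared difference of two
fixed points, it shows that they agree.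
-/

def MemLpIoc (p T : ℝ) (f : ℝ → ℝ) : Prop :=
  Measurable f ∧ IntegrableOn (fun t => |f t| ^ p) (Ioc 0 T)

theorem integrableOn_abs_rpow_iff_memLp {p : ℝ} (hp : 0 < p) {s : Set ℝ} {f : ℝ → ℝ}
    (hf : Measurable f) :
    IntegrableOn (fun t => |f t| ^ p) s ↔ MemLp f (ENNReal.ofReal p) (volume.restrict s) := by
  rw [← integrable_norm_rpow_iff hf.aestronglyMeasurable (by simpa using hp)
    ENNReal.ofReal_ne_top, ENNReal.toReal_ofReal hp.le]
  simp only [Real.norm_eq_abs, IntegrableOn]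

namespace MemLpIoc

variable {p T : ℝ} {f g : ℝ → ℝ}

theorem memLp (hp : 0 < p) (hf : MemLpIoc p T f) :
    MemLp f (ENNReal.ofReal p) (volume.restrict (Ioc 0 T)) :=
  (integrableOn_abs_rpow_iff_memLp hp hf.1).1 hf.2

theorem zero (hp : 0 < p) : MemLpIoc p T 0 :=
  ⟨measurable_zero, (integrableOn_abs_rpow_iff_memLp hp measurable_zero).2 MemLp.zero⟩

theorem of_abs_sub_le (hp : 0 < p) (hg : MemLpIoc p T g) (hf : Measurable f) {K : ℝ}
    (hK : ∀ t ∈ Ioc 0 T, |f t - g t| ≤ K) : MemLpIoc p T f := by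
  have hfg : MemLp (f - g) (ENNReal.ofReal p) (volume.restrict (Ioc 0 T)) :=
    MemLp.of_bound (hf.sub hg.1).aestronglyMeasurable K
      ((ae_restrict_iff' measurableSet_Ioc).2 (Eventually.of_forall hK))
  exact ⟨hf, (integrableOn_abs_rpow_iff_memLp hp hf).2 (by simpa using hfg.add (hg.memLp hp))⟩

theorem integrableOn_sq_sub (hp : 2 ≤ p) (hf : MemLpIoc p T f) (hg : MemLpIoc p T g) {t : ℝ}
    (ht : t ≤ T) : IntegrableOn (fun τ => (f τ - g τ) ^ 2) (Ioc 0 t) := by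
  have hp0 : 0 < p := by linarith
  have h2 : MemLp (f - g) 2 (volume.restrict (Ioc 0 T)) :=
    ((hf.memLp hp0).sub (hg.memLp hp0)).mono_exponent
      (by simpa using ENNReal.ofReal_le_ofReal hp)
  exact IntegrableOn.mono_set h2.integrable_sq (Ioc_subset_Ioc_right ht)

end MemLpIoc

theorem mul_integral_Ioc_mul_pow_div_factorial (c M : ℝ) (n : ℕ) {t : ℝ} (ht : 0 ≤ t) :
    c * ∫ τ in Ioc 0 t, M * ((c * τ) ^ n / n !) = M * ((c * t) ^ (n + 1) / (n + 1)!) := by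
  rw [← intervalIntegral.integral_of_le ht]
  simp only [mul_pow, intervalIntegral.integral_const_mul, intervalIntegral.integral_div,
    integral_pow]
  push_cast [Nat.factorial_succ]
  field_simp
  ring

theorem le_mul_pow_div_factorial_of_le_mul_integral_Ioc {c M T : ℝ} (hc : 0 ≤ c)
    {u : ℕ → ℝ → ℝ} (hu : ∀ n t, 0 ≤ u n t) (h0 : ∀ t ∈ Icc 0 T, u 0 t ≤ M)
    (hsucc : ∀ n, ∀ t ∈ Icc 0 T, u (n + 1) t ≤ c * ∫ τ in Ioc 0 t, u n τ) :
    ∀ n, ∀ t ∈ Icc 0 T, u n t ≤ M * ((c * t) ^ n / n !) := by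
  intro n
  induction n with
  | zero => simpa using h0
  | succ n ih =>
    intro t ht
    have hint : ∫ τ in Ioc 0 t, u n τ ≤ ∫ τ in Ioc 0 t, M * ((c * τ) ^ n / n !) :=
      integral_mono_of_nonneg (Eventually.of_forall (hu n))
        (Continuous.integrableOn_Ioc (by fun_prop))
        ((ae_restrict_iff' measurableSet_Ioc).2 <| Eventually.of_forall
          fun τ hτ => ih τ ⟨hτ.1.le, hτ.2.trans ht.2⟩)
    calc u (n + 1) t ≤ c * ∫ τ in Ioc 0 t, u n τ := hsucc n t ht
      _ ≤ c * ∫ τ in Ioc 0 t, M * ((c * τ) ^ n / n !) := by gcongr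
      _ = M * ((c * t) ^ (n + 1) / (n + 1)!) := mul_integral_Ioc_mul_pow_div_factorial c M n ht.1

theorem eqOn_zero_of_le_mul_integral_Ioc {c M T : ℝ} (hc : 0 ≤ c) {e : ℝ → ℝ}
    (he : ∀ t, 0 ≤ e t) (hM : ∀ t ∈ Icc 0 T, e t ≤ M)
    (he_le : ∀ t ∈ Icc 0 T, e t ≤ c * ∫ τ in Ioc 0 t, e τ) : EqOn e 0 (Icc 0 T) := by
  intro t ht
  have hbound := (le_mul_pow_div_factorial_of_le_mul_integral_Ioc hc (u := fun _ => e)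
    (fun _ => he) hM (fun _ => he_le) · t ht)
  exact le_antisymm (ge_of_tendsto' (by simpa using
    (FloorSemiring.tendsto_pow_div_factorial_atTop (c * t)).const_mul M) hbound) (he t)

theorem exists_measurable_dist_le_tsum_of_dist_le_summable {α E : Type*} [MeasurableSpace α]
    [NormedAddCommGroup E] [CompleteSpace E] [MeasurableSpace E] [BorelSpace E]
    {F : ℕ → α → E} (hF : ∀ n, Measurable (F n)) {s : Set α} (hs : MeasurableSet s)
    {b : ℕ → ℝ} (hb0 : ∀ n, 0 ≤ b n) (hb : Summable b)
    (hFb : ∀ n, ∀ x ∈ s, dist (F n x) (F (n + 1) x) ≤ b n) :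
    ∃ f : α → E, Measurable f ∧
      ∀ n, ∀ x ∈ s, dist (F n x) (f x) ≤ ∑' m, b (n + m) := by
  have hG : ∀ x n, dist (s.indicator (F n) x) (s.indicator (F (n + 1)) x) ≤ b n := by
    intro x n
    by_cases hx : x ∈ s
    · simpa only [indicator_of_mem hx] using hFb n x hx
    · simpa only [indicator_of_notMem hx, dist_self] using hb0 n
  choose f hf using fun x =>
    cauchySeq_tendsto_of_complete (cauchySeq_of_dist_le_of_summable b (hG x) hb)
  refine ⟨f, measurable_of_tendsto_metrizable' atTop (fun n => (hF n).indicator hs)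
    (tendsto_pi_nhds.2 hf), fun n x hx => ?_⟩
  simpa only [indicator_of_mem hx] using dist_le_tsum_of_dist_le_of_tendsto b (hG x) hb (hf x) n

theorem abs_le_add_div_of_sq_le {x a r : ℝ} (hr : 0 < r) (hx : x ^ 2 ≤ a) :
    |x| ≤ r + a / r := by
  have h : |x| * r ≤ r * r + a := by nlinarith [two_mul_le_add_sq r |x|, sq_abs x]
  calc |x| ≤ (r * r + a) / r := (le_div_iff₀ hr).2 h
    _ = r + a / r := by rw [add_div, mul_div_cancel_right₀ r hr.ne']

theorem sq_le_sq_mul_of_abs_le_mul_rpow_half {x C s : ℝ} (hs : 0 ≤ s)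
    (h : |x| ≤ C * s ^ (1 / 2 : ℝ)) : x ^ 2 ≤ C ^ 2 * s := by
  calc x ^ 2 = |x| ^ 2 := (sq_abs x).symm
    _ ≤ (C * s ^ (1 / 2 : ℝ)) ^ 2 := pow_le_pow_left₀ (abs_nonneg x) h 2
    _ = C ^ 2 * s := by rw [mul_pow, ← Real.sqrt_eq_rpow, Real.sq_sqrt hs]

structure IsVolterraLipschitz (p T C : ℝ) (A : (ℝ → ℝ) → ℝ → ℝ) : Prop where
  memLpIoc_apply : ∀ f, MemLpIoc p T f → MemLpIoc p T (A f)
  sq_sub_le : ∀ f g, MemLpIoc p T f → MemLpIoc p T g → ∀ t ∈ Icc 0 T,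
    (A f t - A g t) ^ 2 ≤ C ^ 2 * ∫ τ in Ioc 0 t, (f τ - g τ) ^ 2

namespace IsVolterraLipschitz

variable {p T C : ℝ} {A : (ℝ → ℝ) → ℝ → ℝ} {f g u₀ : ℝ → ℝ}

theorem sq_sub_le_integral (hA : IsVolterraLipschitz p T C A) (hp : 2 ≤ p)
    (hf : MemLpIoc p T f) (hg : MemLpIoc p T g) {t : ℝ} (ht : t ∈ Icc 0 T) :
    (A f t - A g t) ^ 2 ≤ C ^ 2 * ∫ τ in Ioc 0 T, (f τ - g τ) ^ 2 := by
  refine (hA.sq_sub_le f g hf hg t ht).trans (mul_le_mul_of_nonneg_left ?_ (sq_nonneg C))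
  exact setIntegral_mono_set (hf.integrableOn_sq_sub hp hg le_rfl)
    (Eventually.of_forall fun τ => sq_nonneg _) (Ioc_subset_Ioc_right ht.2).eventuallyLE

theorem apply_eqOn_of_ae_eq (hA : IsVolterraLipschitz p T C A) (hf : MemLpIoc p T f)
    (hg : MemLpIoc p T g) (hfg : f =ᵐ[volume.restrict (Ioc 0 T)] g) :
    EqOn (A f) (A g) (Icc 0 T) := by
  intro t ht
  have hzero : ∫ τ in Ioc 0 t, (f τ - g τ) ^ 2 = 0 := by
    refine integral_eq_zero_of_ae ?_
    filter_upwards [ae_restrict_of_ae_restrict_of_subset (Ioc_subset_Ioc_right ht.2) hfg]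
      with τ hτ
    simp [hτ]
  have := hA.sq_sub_le f g hf hg t ht
  rw [hzero, mul_zero] at this
  exact sub_eq_zero.1 (pow_eq_zero_iff two_ne_zero |>.1 (le_antisymm this (sq_nonneg _)))

theorem eqOn_of_eqOn_apply (hA : IsVolterraLipschitz p T C A) (hp : 2 ≤ p)
    (hf : MemLpIoc p T f) (hg : MemLpIoc p T g) (hAf : EqOn (A f) f (Icc 0 T))
    (hAg : EqOn (A g) g (Icc 0 T)) : EqOn f g (Icc 0 T) := by
  have hsq : ∀ t ∈ Icc 0 T, (f t - g t) ^ 2 = (A f t - A g t) ^ 2 := fun t ht => by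
    rw [hAf ht, hAg ht]
  have hzero := eqOn_zero_of_le_mul_integral_Ioc (sq_nonneg C) (fun t => sq_nonneg (f t - g t))
    (fun t ht => (hsq t ht).trans_le (hA.sq_sub_le_integral hp hf hg ht))
    (fun t ht => (hsq t ht).trans_le (hA.sq_sub_le f g hf hg t ht))
  intro t ht
  exact sub_eq_zero.1 (pow_eq_zero_iff two_ne_zero |>.1 (hzero ht))

theorem ae_eq_of_ae_eq_apply (hA : IsVolterraLipschitz p T C A) (hp : 2 ≤ p)
    (hf : MemLpIoc p T f) (hg : MemLpIoc p T g) (hAf : EqOn (A f) f (Icc 0 T))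
    (hAg : g =ᵐ[volume.restrict (Ioc 0 T)] A g) : g =ᵐ[volume.restrict (Ioc 0 T)] f := by
  -- `A` only sees the a.e. class of its argument, so `A g` is a fixed point on all of `[0, T]`
  have hAg' : MemLpIoc p T (A g) := hA.memLpIoc_apply g hg
  have hfix : EqOn (A (A g)) (A g) (Icc 0 T) := hA.apply_eqOn_of_ae_eq hAg' hg hAg.symm
  have hAgf : EqOn (A g) f (Icc 0 T) := hA.eqOn_of_eqOn_apply hp hAg' hf hfix hAf
  filter_upwards [hAg, ae_restrict_mem measurableSet_Ioc] with t hgt ht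
  exact hgt.trans (hAgf ⟨ht.1.le, ht.2⟩)

theorem tendsto_apply (hA : IsVolterraLipschitz p T C A) (hp : 2 ≤ p) {u : ℕ → ℝ → ℝ}
    (hu : ∀ n, MemLpIoc p T (u n)) (hf : MemLpIoc p T f) {ε : ℕ → ℝ}
    (hε : Tendsto ε atTop (𝓝 0)) (huf : ∀ n, ∀ t ∈ Icc 0 T, |u n t - f t| ≤ ε n)
    {t : ℝ} (ht : t ∈ Icc 0 T) : Tendsto (fun n => A (u n) t) atTop (𝓝 (A f t)) := by
  set V := volume.real (Ioc (0 : ℝ) T)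
  have hbound : ∀ n, dist (A (u n) t) (A f t) ≤ |C| * √V * |ε n| := by
    intro n
    have hint : ∫ τ in Ioc 0 T, (u n τ - f τ) ^ 2 ≤ ε n ^ 2 * V := by
      have hsq : ∀ τ ∈ Ioc 0 T, ‖(u n τ - f τ) ^ 2‖ ≤ ε n ^ 2 := fun τ hτ => by
        rw [Real.norm_eq_abs, abs_of_nonneg (sq_nonneg _), ← sq_abs]
        exact pow_le_pow_left₀ (abs_nonneg _) (huf n τ ⟨hτ.1.le, hτ.2⟩) 2
      exact (le_abs_self _).trans (norm_setIntegral_le_of_norm_le_const measure_Ioc_lt_top hsq)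
    refine abs_le_of_sq_le_sq ((hA.sq_sub_le_integral hp (hu n) hf ht).trans ?_) (by positivity)
    rw [mul_pow, mul_pow, sq_abs, sq_abs, Real.sq_sqrt measureReal_nonneg]
    nlinarith [sq_nonneg C]
  refine tendsto_iff_dist_tendsto_zero.2 (squeeze_zero (fun n => dist_nonneg) hbound ?_)
  simpa using (hε.abs.const_mul (|C| * √V))

theorem memLpIoc_iterate (hA : IsVolterraLipschitz p T C A) (hu₀ : MemLpIoc p T u₀) (n : ℕ) :
    MemLpIoc p T (A^[n] u₀) := by
  induction n with
  | zero => exact hu₀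
  | succ n ih => rw [Function.iterate_succ_apply']; exact hA.memLpIoc_apply _ ih

theorem exists_eqOn_apply_of_dist_iterate_le (hA : IsVolterraLipschitz p T C A) (hp : 2 ≤ p)
    (hu₀ : MemLpIoc p T u₀) {b : ℕ → ℝ} (hb0 : ∀ n, 0 ≤ b n) (hb : Summable b)
    (hdist : ∀ n, ∀ t ∈ Icc 0 T, dist (A^[n] u₀ t) (A^[n + 1] u₀ t) ≤ b n) :
    ∃ f, MemLpIoc p T f ∧ EqOn (A f) f (Icc 0 T) := by
  have hu := hA.memLpIoc_iterate hu₀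
  obtain ⟨f, hfm, hf⟩ := exists_measurable_dist_le_tsum_of_dist_le_summable (fun n => (hu n).1)
    measurableSet_Icc hb0 hb hdist
  have hf_mem : MemLpIoc p T f := MemLpIoc.of_abs_sub_le (by linarith) hu₀ hfm fun t ht => by
    simpa [Real.dist_eq, abs_sub_comm] using hf 0 t ⟨ht.1.le, ht.2⟩
  have htail : Tendsto (fun n => ∑' m, b (n + m)) atTop (𝓝 0) := by
    simpa only [add_comm] using tendsto_sum_nat_add b
  refine ⟨f, hf_mem, fun t ht => ?_⟩
  have hlim : Tendsto (fun n => A^[n] u₀ t) atTop (𝓝 (f t)) :=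
    tendsto_iff_dist_tendsto_zero.2 (squeeze_zero (fun n => dist_nonneg) (hf · t ht) htail)
  have hAlim : Tendsto (fun n => A (A^[n] u₀) t) atTop (𝓝 (A f t)) :=
    hA.tendsto_apply hp hu hf_mem htail
      (fun n τ hτ => by simpa only [Real.dist_eq] using hf n τ hτ) ht
  exact tendsto_nhds_unique hAlim ((hlim.comp (tendsto_add_atTop_nat 1)).congr fun n =>
    congrFun (Function.iterate_succ_apply' A n u₀) t)

theorem sq_iterate_sub_le (hA : IsVolterraLipschitz p T C A) (hp : 2 ≤ p)
    (hu₀ : MemLpIoc p T u₀) (n : ℕ) {t : ℝ} (ht : t ∈ Icc 0 T) :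
    (A^[n + 2] u₀ t - A^[n + 1] u₀ t) ^ 2 ≤
      (C ^ 2 * ∫ τ in Ioc 0 T, (A u₀ τ - u₀ τ) ^ 2) * ((C ^ 2 * t) ^ n / n !) := by
  have hu := hA.memLpIoc_iterate hu₀
  refine le_mul_pow_div_factorial_of_le_mul_integral_Ioc (sq_nonneg C)
    (u := fun n t => (A^[n + 2] u₀ t - A^[n + 1] u₀ t) ^ 2) (fun _ _ => sq_nonneg _)
    (fun t ht => ?_) (fun n t ht => ?_) n t ht
  · simpa only [Function.iterate_succ_apply', Function.iterate_zero_apply]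
      using hA.sq_sub_le_integral hp (hu 1) (hu 0) ht
  · simpa only [Function.iterate_succ_apply' A (n + 2), Function.iterate_succ_apply' A (n + 1)]
      using hA.sq_sub_le _ _ (hu (n + 2)) (hu (n + 1)) t ht

theorem exists_eqOn_apply (hA : IsVolterraLipschitz p T C A) (hp : 2 ≤ p) (hT : 0 ≤ T) :
    ∃ f, MemLpIoc p T f ∧ EqOn (A f) f (Icc 0 T) := by
  have hu₀ : MemLpIoc p T 0 := MemLpIoc.zero (by linarith)
  set M := C ^ 2 * ∫ τ in Ioc 0 T, (A 0 τ - (0 : ℝ → ℝ) τ) ^ 2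
  have hM : 0 ≤ M :=
    mul_nonneg (sq_nonneg C) (setIntegral_nonneg measurableSet_Ioc fun τ _ => sq_nonneg _)
  -- `|x| ≤ 2⁻ⁿ + 2ⁿ x²` turns the factorial bounds on the squares into a summable sequence
  set b : ℕ → ℝ := fun n => (1 / 2) ^ n + M * ((C ^ 2 * T) ^ n / n !) / (1 / 2) ^ n
  have hb : Summable b := by
    refine summable_geometric_two.add (((Real.summable_pow_div_factorial (2 * C ^ 2 * T)).mul_left
      M).congr fun n => ?_)
    rw [mul_pow, mul_pow, div_pow, one_pow, mul_pow]
    field_simp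
  refine hA.exists_eqOn_apply_of_dist_iterate_le hp (hA.memLpIoc_apply 0 hu₀) (b := b)
    (fun n => by positivity) hb fun n t ht => ?_
  rw [← Function.iterate_succ_apply, ← Function.iterate_succ_apply, dist_comm, Real.dist_eq]
  refine abs_le_add_div_of_sq_le (by positivity) ((hA.sq_iterate_sub_le hp hu₀ n ht).trans ?_)
  obtain ⟨ht0, htT⟩ := ht
  gcongr

end IsVolterraLipschitz

theorem stmt3_general (p T C : ℝ) (hp : 2 ≤ p) (hT : 0 < T)
    (A : (ℝ → ℝ) → (ℝ → ℝ))
    (hAmap : ∀ f : ℝ → ℝ, Measurable f → IntegrableOn (fun t => |f t| ^ p) (Ioc 0 T) →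
      Measurable (A f) ∧ IntegrableOn (fun t => |A f t| ^ p) (Ioc 0 T))
    (hA : ∀ f₁ f₂ : ℝ → ℝ, Measurable f₁ → Measurable f₂ →
      IntegrableOn (fun t => |f₁ t| ^ p) (Ioc 0 T) →
      IntegrableOn (fun t => |f₂ t| ^ p) (Ioc 0 T) →
      ∀ t ∈ Icc (0:ℝ) T,
        |A f₁ t - A f₂ t| ≤ C * (∫ τ in Ioc (0:ℝ) t, (f₁ τ - f₂ τ) ^ 2) ^ ((1:ℝ)/2)) :
    ∃ f : ℝ → ℝ, (Measurable f ∧ IntegrableOn (fun t => |f t| ^ p) (Ioc 0 T)) ∧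
      f =ᵐ[volume.restrict (Ioc (0:ℝ) T)] A f ∧
      ∀ g : ℝ → ℝ, Measurable g → IntegrableOn (fun t => |g t| ^ p) (Ioc 0 T) →
        g =ᵐ[volume.restrict (Ioc (0:ℝ) T)] A g →
        g =ᵐ[volume.restrict (Ioc (0:ℝ) T)] f := by
  have hV : IsVolterraLipschitz p T C A :=
    ⟨fun f hf => hAmap f hf.1 hf.2, fun f g hf hg t ht =>
      sq_le_sq_mul_of_abs_le_mul_rpow_half (setIntegral_nonneg measurableSet_Ioc
        fun τ _ => sq_nonneg _) (hA f g hf.1 hg.1 hf.2 hg.2 t ht)⟩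
  obtain ⟨f, hf, hAf⟩ := hV.exists_eqOn_apply hp hT.le
  refine ⟨f, hf, ?_, fun g hgm hgi hAg => hV.ae_eq_of_ae_eq_apply hp hf ⟨hgm, hgi⟩ hAf hAg⟩
  filter_upwards [ae_restrict_mem measurableSet_Ioc] with t ht
  exact (hAf ⟨ht.1.le, ht.2⟩).symm

/-- an operator `A` on `L^p(0,T)` (`2 ≤ p < ∞`) satisfying the Volterra bound
`|Af₁(t) − Af₂(t)| ≤ C (∫₀ᵗ |f₁ − f₂|²)^{1/2}` has a unique fixed point in `L^p(0,T)`
(unique up to a.e. equality). -/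
theorem stmt3 (H : Type*) [NormedAddCommGroup H] [CompleteSpace H]
    (p T C : ℝ) (hp : 2 ≤ p) (hT : 0 < T) (hC : 0 < C)
    (A : (ℝ → ℝ) → (ℝ → ℝ))
    (hAmap : ∀ f : ℝ → ℝ, Measurable f → IntegrableOn (fun t => |f t| ^ p) (Ioc 0 T) →
      Measurable (A f) ∧ IntegrableOn (fun t => |A f t| ^ p) (Ioc 0 T))
    (hA : ∀ f₁ f₂ : ℝ → ℝ, Measurable f₁ → Measurable f₂ →
      IntegrableOn (fun t => |f₁ t| ^ p) (Ioc 0 T) →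
      IntegrableOn (fun t => |f₂ t| ^ p) (Ioc 0 T) →
      ∀ t ∈ Icc (0:ℝ) T,
        |A f₁ t - A f₂ t| ≤ C * (∫ τ in Ioc (0:ℝ) t, (f₁ τ - f₂ τ) ^ 2) ^ ((1:ℝ)/2)) :
    ∃ f : ℝ → ℝ, (Measurable f ∧ IntegrableOn (fun t => |f t| ^ p) (Ioc 0 T)) ∧
      f =ᵐ[volume.restrict (Ioc (0:ℝ) T)] A f ∧
      ∀ g : ℝ → ℝ, Measurable g → IntegrableOn (fun t => |g t| ^ p) (Ioc 0 T) →
        g =ᵐ[volume.restrict (Ioc (0:ℝ) T)] A g →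
        g =ᵐ[volume.restrict (Ioc (0:ℝ) T)] f :=
  stmt3_general p T C hp hT A hAmap hA
end

section
/- Let T, L > 0 and set X(Q_T) = C([0,T]; L²(0,L)) ∩ L²(0,T; H²(0,L)) with norm ‖v‖_X = max_{t∈[0,T]}‖v(t,·)‖_{L²(0,L)} + ‖v_{xx}‖_{L²(Q_T)}. Then there is a constant C(L) such that for every v ∈ X(Q_T), ‖v²‖_{L²(Q_T)} ≤ C(L)·(T^{1/2} + T^{1/4})·‖v‖²_{X(Q_T)}. -/
/-!
On each time slice, averaging `f x ^ 2 ≤ f y ^ 2 + 2 ‖f‖ ‖f'‖` over `y` bounds `sup f ^ 2` by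
`‖f‖² / L + 2 ‖f‖ ‖f'‖`. The same estimate for `f'`, anchored at a mean-value point where
`f' = (f L - f 0) / L`, gives a quadratic inequality for `‖f'‖`, whence the interpolation bound
`‖f'‖ ≤ 10 ‖f‖ / L + 2 L ‖f''‖` and the Agmon-type bound `sup f ^ 2 ≤ 21 ‖f‖² / L + 4 L ‖f‖ ‖f''‖`.
Then `∫ f ^ 4 ≤ sup f ^ 2 · ‖f‖²`; integrating in time with `‖v(t)‖ ≤ A` and Cauchy–Schwarz,
`∫ ‖v_xx(t)‖ dt ≤ √T ‖v_xx‖_{L²(Q_T)}`, gives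
`‖v²‖² ≤ 21 A⁴ T / L + 4 L A³ √T ‖v_xx‖_{L²(Q_T)}`; taking square roots yields `√T + T^{1/4}`.
-/

open MeasureTheory Set

lemma integral_abs_mul_le_sqrt_mul_sqrt {α : Type*} [MeasurableSpace α] {μ : Measure α}
    {f g : α → ℝ} (hf : MemLp f 2 μ) (hg : MemLp g 2 μ) :
    ∫ a, |f a * g a| ∂μ ≤ √(∫ a, f a ^ 2 ∂μ) * √(∫ a, g a ^ 2 ∂μ) := by
  have h := integral_mul_le_Lp_mul_Lq_of_nonneg Real.HolderConjugate.two_two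
    (ae_of_all _ fun a => abs_nonneg (f a)) (ae_of_all _ fun a => abs_nonneg (g a))
    (by rw [ENNReal.ofReal_ofNat]; exact hf.abs) (by rw [ENNReal.ofReal_ofNat]; exact hg.abs)
  simpa [abs_mul, Real.sqrt_eq_rpow] using h

lemma memLp_two_sqrt {α : Type*} [MeasurableSpace α] {μ : Measure α} {g : α → ℝ}
    (hg : Integrable g μ) (hg0 : ∀ a, 0 ≤ g a) : MemLp (fun a => √(g a)) 2 μ :=
  (memLp_two_iff_integrable_sq (Real.continuous_sqrt.comp_aestronglyMeasurable
    hg.aestronglyMeasurable)).2 (by simpa [Real.sq_sqrt (hg0 _)] using hg)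

lemma integral_sqrt_le_sqrt_mul_sqrt {α : Type*} [MeasurableSpace α] {μ : Measure α}
    [IsFiniteMeasure μ] {g : α → ℝ} (hg : Integrable g μ) (hg0 : ∀ a, 0 ≤ g a) :
    ∫ a, √(g a) ∂μ ≤ √(μ.real univ) * √(∫ a, g a ∂μ) := by
  have h := integral_abs_mul_le_sqrt_mul_sqrt (memLp_const (1 : ℝ)) (memLp_two_sqrt hg hg0)
  simpa [Real.sq_sqrt (hg0 _), abs_of_nonneg (Real.sqrt_nonneg _)] using h

lemma aestronglyMeasurable_of_hasDerivAt {f f' : ℝ → ℝ} {s : Set ℝ} (hs : MeasurableSet s)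
    (hf : ∀ x ∈ s, HasDerivAt f (f' x) x) : AEStronglyMeasurable f' (volume.restrict s) :=
  (measurable_deriv f).aestronglyMeasurable.congr <|
    (ae_restrict_iff' hs).2 <| ae_of_all _ fun x hx => (hf x hx).deriv

section Interval

variable {L : ℝ} {f f' f'' : ℝ → ℝ}

lemma memLp_two_of_continuousOn (hf : ContinuousOn f (Icc 0 L)) :
    MemLp f 2 (volume.restrict (Ioc 0 L)) :=
  (memLp_two_iff_integrable_sq ((hf.mono Ioc_subset_Icc_self).aestronglyMeasurable
    measurableSet_Ioc)).2 ((hf.pow 2).integrableOn_Icc.mono_set Ioc_subset_Icc_self)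

lemma sq_le_sq_add_of_hasDerivAt (hf : ∀ x ∈ Icc 0 L, HasDerivAt f (f' x) x)
    (hf' : IntegrableOn (fun x => f' x ^ 2) (Ioc 0 L)) {x y : ℝ} (hx : x ∈ Icc 0 L)
    (hy : y ∈ Icc 0 L) :
    f x ^ 2 ≤ f y ^ 2 + 2 * (√(∫ s in Ioc 0 L, f s ^ 2) * √(∫ s in Ioc 0 L, f' s ^ 2)) := by
  have hf2 := memLp_two_of_continuousOn (HasDerivAt.continuousOn hf)
  have hf'2 : MemLp f' 2 (volume.restrict (Ioc 0 L)) :=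
    (memLp_two_iff_integrable_sq
      ((aestronglyMeasurable_of_hasDerivAt measurableSet_Icc hf).mono_measure
        (Measure.restrict_mono Ioc_subset_Icc_self le_rfl))).2 hf'
  have hint : IntegrableOn (fun s => 2 * (f s * f' s)) (Ioc 0 L) :=
    (hf2.integrable_mul hf'2).const_mul 2
  have hsub : uIoc y x ⊆ Ioc 0 L := by
    rw [uIoc]; exact Ioc_subset_Ioc (le_min hy.1 hx.1) (max_le hy.2 hx.2)
  have hftc : ∫ s in y..x, 2 * (f s * f' s) = f x ^ 2 - f y ^ 2 := by
    refine intervalIntegral.integral_eq_sub_of_hasDerivAt (f := fun s => f s ^ 2)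
      (fun s hs => ?_) (intervalIntegrable_iff.2 (hint.mono_set hsub))
    simpa [mul_assoc] using (hf s (uIcc_subset_Icc hy hx hs)).fun_pow 2
  calc f x ^ 2 = f y ^ 2 + ∫ s in y..x, 2 * (f s * f' s) := by rw [hftc]; ring
    _ ≤ f y ^ 2 + ∫ s in uIoc y x, |2 * (f s * f' s)| := by
      have h := intervalIntegral.norm_integral_le_integral_norm_uIoc (μ := volume) (a := y)
        (b := x) (f := fun s => 2 * (f s * f' s))
      simp only [Real.norm_eq_abs] at h
      linarith [le_abs_self (∫ s in y..x, 2 * (f s * f' s))]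
    _ ≤ f y ^ 2 + ∫ s in Ioc 0 L, |2 * (f s * f' s)| := by
      have h := setIntegral_mono_set hint.abs (ae_of_all _ fun s => abs_nonneg _)
        hsub.eventuallyLE
      linarith
    _ ≤ _ := by
      simp only [abs_mul (2 : ℝ), abs_two, integral_const_mul]
      gcongr
      exact integral_abs_mul_le_sqrt_mul_sqrt hf2 hf'2

lemma sq_le_integral_sq_div_add_of_hasDerivAt (hL : 0 < L)
    (hf : ∀ x ∈ Icc 0 L, HasDerivAt f (f' x) x)
    (hf' : IntegrableOn (fun x => f' x ^ 2) (Ioc 0 L)) {x : ℝ} (hx : x ∈ Icc 0 L) :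
    f x ^ 2 ≤ (∫ s in Ioc 0 L, f s ^ 2) / L +
      2 * (√(∫ s in Ioc 0 L, f s ^ 2) * √(∫ s in Ioc 0 L, f' s ^ 2)) := by
  obtain ⟨y, hy, hy_le⟩ := exists_le_setAverage (by simp [hL]) (by simp)
    (memLp_two_of_continuousOn (HasDerivAt.continuousOn hf)).integrable_sq
  rw [setAverage_eq, Real.volume_real_Ioc_of_le hL.le, sub_zero, smul_eq_mul,
    inv_mul_eq_div] at hy_le
  linarith [sq_le_sq_add_of_hasDerivAt hf hf' hx (Ioc_subset_Icc_self hy)]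

lemma sqrt_integral_sq_deriv_le (hL : 0 < L) (hf : ∀ x ∈ Icc 0 L, HasDerivAt f (f' x) x)
    (hf' : ∀ x ∈ Icc 0 L, HasDerivAt f' (f'' x) x)
    (hf'' : IntegrableOn (fun x => f'' x ^ 2) (Ioc 0 L)) :
    √(∫ x in Ioc 0 L, f' x ^ 2) ≤
      10 * √(∫ x in Ioc 0 L, f x ^ 2) / L + 2 * L * √(∫ x in Ioc 0 L, f'' x ^ 2) := by
  set p := √(∫ x in Ioc 0 L, f x ^ 2)
  set q := √(∫ x in Ioc 0 L, f' x ^ 2)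
  set r := √(∫ x in Ioc 0 L, f'' x ^ 2)
  have hp : p ^ 2 = ∫ x in Ioc 0 L, f x ^ 2 :=
    Real.sq_sqrt (setIntegral_nonneg measurableSet_Ioc fun _ _ => sq_nonneg _)
  have hq : q ^ 2 = ∫ x in Ioc 0 L, f' x ^ 2 :=
    Real.sq_sqrt (setIntegral_nonneg measurableSet_Ioc fun _ _ => sq_nonneg _)
  have hf'2 := (memLp_two_of_continuousOn (HasDerivAt.continuousOn hf')).integrable_sq
  have hsup : ∀ x ∈ Icc 0 L, f x ^ 2 ≤ p ^ 2 / L + 2 * (p * q) := fun x hx => by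
    simpa only [hp] using sq_le_integral_sq_div_add_of_hasDerivAt hL hf hf'2 hx
  obtain ⟨ξ, hξ, hξ_eq⟩ := exists_hasDerivAt_eq_slope f f' hL (HasDerivAt.continuousOn hf)
    fun x hx => hf x (Ioo_subset_Icc_self hx)
  have hξ_sq : L ^ 2 * f' ξ ^ 2 ≤ 4 * (p ^ 2 / L + 2 * (p * q)) := by
    rw [hξ_eq, sub_zero, div_pow, mul_div_cancel₀ _ (by positivity)]
    nlinarith [hsup 0 (left_mem_Icc.2 hL.le), hsup L (right_mem_Icc.2 hL.le),
      sq_nonneg (f L + f 0)]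
  have hq_sq : q ^ 2 ≤ L * (f' ξ ^ 2 + 2 * (q * r)) := calc
    q ^ 2 ≤ ∫ _ in Ioc 0 L, f' ξ ^ 2 + 2 * (q * r) :=
      hq ▸ setIntegral_mono_on hf'2 (integrableOn_const measure_Ioc_lt_top.ne)
        measurableSet_Ioc fun x hx =>
          sq_le_sq_add_of_hasDerivAt hf' hf'' (Ioc_subset_Icc_self hx) (Ioo_subset_Icc_self hξ)
    _ = L * (f' ξ ^ 2 + 2 * (q * r)) := by simp [hL.le]
  have hr0 : 0 ≤ r := Real.sqrt_nonneg _
  have hquad : q ^ 2 ≤ 4 * (p / L) ^ 2 + (8 * (p / L) + 2 * L * r) * q := by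
    have h : L * q ^ 2 ≤ L * (4 * (p / L) ^ 2 + (8 * (p / L) + 2 * L * r) * q) := by
      have e : L * (4 * (p / L) ^ 2 + (8 * (p / L) + 2 * L * r) * q) =
          4 * (p ^ 2 / L + 2 * (p * q)) + 2 * L ^ 2 * (q * r) := by
        field_simp; ring
      rw [e]; nlinarith
    exact le_of_mul_le_mul_left h hL
  have ha : 0 ≤ p / L := by positivity
  rw [mul_div_assoc]
  -- with `a = p / L`, the positive root of `q ^ 2 = 4 a ^ 2 + b q` is at most `b + 2 a`
  nlinarith [mul_nonneg hL.le hr0]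

lemma sq_le_of_hasDerivAt_of_hasDerivAt (hL : 0 < L) (hf : ∀ x ∈ Icc 0 L, HasDerivAt f (f' x) x)
    (hf' : ∀ x ∈ Icc 0 L, HasDerivAt f' (f'' x) x)
    (hf'' : IntegrableOn (fun x => f'' x ^ 2) (Ioc 0 L)) {x : ℝ} (hx : x ∈ Icc 0 L) :
    f x ^ 2 ≤ 21 * (∫ s in Ioc 0 L, f s ^ 2) / L +
      4 * L * √(∫ s in Ioc 0 L, f s ^ 2) * √(∫ s in Ioc 0 L, f'' s ^ 2) := by
  have h := sq_le_integral_sq_div_add_of_hasDerivAt hL hf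
    (memLp_two_of_continuousOn (HasDerivAt.continuousOn hf')).integrable_sq hx
  have hq := sqrt_integral_sq_deriv_le hL hf hf' hf''
  set P := ∫ s in Ioc 0 L, f s ^ 2
  have hP : √P * √P = P :=
    Real.mul_self_sqrt (setIntegral_nonneg measurableSet_Ioc fun s _ => sq_nonneg (f s))
  calc f x ^ 2 ≤ _ := h
    _ ≤ P / L + 2 * (√P * (10 * √P / L + 2 * L * √(∫ s in Ioc 0 L, f'' s ^ 2))) := by
      gcongr
    _ = _ := by linear_combination (20 / L) * hP

lemma integral_pow_four_le_mul_integral_sq {M : ℝ} (hf : ContinuousOn f (Icc 0 L))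
    (hM : ∀ x ∈ Icc 0 L, f x ^ 2 ≤ M) :
    ∫ x in Ioc 0 L, f x ^ 4 ≤ M * ∫ x in Ioc 0 L, f x ^ 2 := by
  rw [← integral_const_mul]
  refine setIntegral_mono_on ((hf.pow 4).integrableOn_Icc.mono_set Ioc_subset_Icc_self)
    (((hf.pow 2).integrableOn_Icc.mono_set Ioc_subset_Icc_self).const_mul M) measurableSet_Ioc
    fun x hx => ?_
  have := hM x (Ioc_subset_Icc_self hx)
  nlinarith [sq_nonneg (f x)]


lemma integral_pow_four_le (hL : 0 < L) (hf : ∀ x ∈ Icc 0 L, HasDerivAt f (f' x) x)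
    (hf' : ∀ x ∈ Icc 0 L, HasDerivAt f' (f'' x) x)
    (hf'' : IntegrableOn (fun x => f'' x ^ 2) (Ioc 0 L)) {A : ℝ}
    (hA : √(∫ x in Ioc 0 L, f x ^ 2) ≤ A) :
    ∫ x in Ioc 0 L, f x ^ 4 ≤
      21 * A ^ 4 / L + 4 * L * A ^ 3 * √(∫ x in Ioc 0 L, f'' x ^ 2) := by
  set p := √(∫ x in Ioc 0 L, f x ^ 2)
  have hp : ∫ x in Ioc 0 L, f x ^ 2 = p ^ 2 :=
    (Real.sq_sqrt (setIntegral_nonneg measurableSet_Ioc fun x _ => sq_nonneg (f x))).symm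
  have hp0 : 0 ≤ p := Real.sqrt_nonneg _
  calc ∫ x in Ioc 0 L, f x ^ 4
      ≤ (21 * p ^ 2 / L + 4 * L * p * √(∫ x in Ioc 0 L, f'' x ^ 2)) * p ^ 2 := by
        rw [← hp]
        exact integral_pow_four_le_mul_integral_sq (HasDerivAt.continuousOn hf) fun x hx =>
          sq_le_of_hasDerivAt_of_hasDerivAt hL hf hf' hf'' hx
    _ ≤ (21 * A ^ 2 / L + 4 * L * A * √(∫ x in Ioc 0 L, f'' x ^ 2)) * A ^ 2 := by
        have hA0 : 0 ≤ A := hp0.trans hA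
        gcongr
    _ = _ := by ring

end Interval

lemma sqrt_integral_sq_le_iSup {v : ℝ → ℝ → ℝ} {T L : ℝ}
    (hv : Continuous fun q : ℝ × ℝ => v q.1 q.2) (hL : 0 ≤ L) {t : ℝ} (ht : t ∈ Icc 0 T) :
    √(∫ x in Ioc 0 L, v t x ^ 2) ≤ ⨆ s : Icc 0 T, √(∫ x in Ioc 0 L, v s x ^ 2) := by
  have hc : Continuous fun s => √(∫ x in Ioc 0 L, v s x ^ 2) := by
    simp_rw [← intervalIntegral.integral_of_le hL]
    exact (intervalIntegral.continuous_parametric_intervalIntegral_of_continuous'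
      (f := fun s x => v s x ^ 2) (hv.fun_pow 2) 0 L).sqrt
  have hbdd : BddAbove (range fun s : Icc 0 T => √(∫ x in Ioc 0 L, v s x ^ 2)) := by
    refine ((isCompact_Icc (a := 0) (b := T)).bddAbove_image hc.continuousOn).mono ?_
    rintro _ ⟨s, rfl⟩
    exact ⟨s, s.2, rfl⟩
  exact le_ciSup hbdd (⟨t, ht⟩ : Icc 0 T)

lemma setIntegral_integral_pow_four_le {T L A : ℝ} (hL : 0 < L) (hT : 0 ≤ T)
    {v vx vxx : ℝ → ℝ → ℝ}
    (hv : ∀ t ∈ Icc 0 T, ∀ x ∈ Icc 0 L, HasDerivAt (v t) (vx t x) x)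
    (hvx : ∀ t ∈ Icc 0 T, ∀ x ∈ Icc 0 L, HasDerivAt (vx t) (vxx t x) x)
    (hvxx : ∀ t ∈ Icc 0 T, IntegrableOn (fun x => vxx t x ^ 2) (Ioc 0 L))
    (hR : IntegrableOn (fun t => ∫ x in Ioc 0 L, vxx t x ^ 2) (Ioc 0 T))
    (hA : ∀ t ∈ Icc 0 T, √(∫ x in Ioc 0 L, v t x ^ 2) ≤ A) :
    ∫ t in Ioc 0 T, ∫ x in Ioc 0 L, v t x ^ 4 ≤
      21 * A ^ 4 / L * T +
        4 * L * A ^ 3 * (√T * √(∫ t in Ioc 0 T, ∫ x in Ioc 0 L, vxx t x ^ 2)) := by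
  have hR0 : ∀ t, 0 ≤ ∫ x in Ioc 0 L, vxx t x ^ 2 := fun t =>
    setIntegral_nonneg measurableSet_Ioc fun x _ => sq_nonneg (vxx t x)
  have hRi := (memLp_two_sqrt hR hR0).integrable one_le_two
  have hslice : ∀ t ∈ Ioc 0 T, ∫ x in Ioc 0 L, v t x ^ 4 ≤
      21 * A ^ 4 / L + 4 * L * A ^ 3 * √(∫ x in Ioc 0 L, vxx t x ^ 2) := fun t ht =>
    have ht' := Ioc_subset_Icc_self ht
    integral_pow_four_le hL (hv t ht') (hvx t ht') (hvxx t ht') (hA t ht')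
  calc ∫ t in Ioc 0 T, ∫ x in Ioc 0 L, v t x ^ 4
      ≤ ∫ t in Ioc 0 T, (21 * A ^ 4 / L + 4 * L * A ^ 3 * √(∫ x in Ioc 0 L, vxx t x ^ 2)) :=
        integral_mono_of_nonneg (ae_of_all _ fun t =>
            setIntegral_nonneg measurableSet_Ioc fun x _ => by positivity)
          ((integrable_const _).add (hRi.const_mul _))
          ((ae_restrict_iff' measurableSet_Ioc).2 (ae_of_all _ hslice))
    _ = 21 * A ^ 4 / L * T +
        4 * L * A ^ 3 * ∫ t in Ioc 0 T, √(∫ x in Ioc 0 L, vxx t x ^ 2) := by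
      rw [integral_add (integrable_const _) (hRi.const_mul _),
        integral_const_mul]
      simp [hT, mul_comm]
    _ ≤ _ := by
      have hA0 : 0 ≤ A := (Real.sqrt_nonneg _).trans (hA 0 ⟨le_rfl, hT⟩)
      gcongr
      simpa [hT] using integral_sqrt_le_sqrt_mul_sqrt hR hR0

lemma sqrt_le_mul_sqrt_add_sqrt_sqrt {L T A B : ℝ} (hL : 0 < L) (hT : 0 ≤ T) (hA : 0 ≤ A)
    (hB : 0 ≤ B) :
    √(21 * A ^ 4 / L * T + 4 * L * A ^ 3 * (√T * B)) ≤
      (√(21 / L) + 2 * √L) * (√T + √√T) * (A + B) ^ 2 := by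
  set a := √(21 / L)
  set b := √L
  set s := √√T
  have ha : a ^ 2 = 21 / L := Real.sq_sqrt (by positivity)
  have hb : b ^ 2 = L := Real.sq_sqrt hL.le
  have hs : s ^ 2 = √T := Real.sq_sqrt (Real.sqrt_nonneg T)
  have hs' : (√T) ^ 2 = T := Real.sq_sqrt hT
  have hA4 : A ^ 4 ≤ (A + B) ^ 4 := by gcongr; linarith
  have hAB : A ^ 3 * B ≤ (A + B) ^ 4 := by
    calc A ^ 3 * B ≤ (A + B) ^ 3 * (A + B) := by gcongr <;> linarith
      _ = (A + B) ^ 4 := by ring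
  have hsplit : (a + 2 * b) * (√T + s) * (A + B) ^ 2 =
      a * √T * (A + B) ^ 2 + 2 * b * s * (A + B) ^ 2 + (a * s + 2 * b * √T) * (A + B) ^ 2 := by
    ring
  have ha0 : 0 ≤ a := Real.sqrt_nonneg _
  have hb0 : 0 ≤ b := Real.sqrt_nonneg _
  have hs0 : 0 ≤ s := Real.sqrt_nonneg _
  have hu : 0 ≤ a * √T * (A + B) ^ 2 := by positivity
  have hw : 0 ≤ 2 * b * s * (A + B) ^ 2 := by positivity
  have hr : 0 ≤ (a * s + 2 * b * √T) * (A + B) ^ 2 := by positivity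
  rw [Real.sqrt_le_left (by rw [hsplit]; positivity), hsplit]
  calc 21 * A ^ 4 / L * T + 4 * L * A ^ 3 * (√T * B)
      = 21 / L * T * A ^ 4 + 4 * L * √T * (A ^ 3 * B) := by ring
    _ ≤ 21 / L * T * (A + B) ^ 4 + 4 * L * √T * (A + B) ^ 4 := by gcongr
    _ = (a * √T * (A + B) ^ 2) ^ 2 + (2 * b * s * (A + B) ^ 2) ^ 2 := by
      simp only [mul_pow, ha, hb, hs, hs']; ring
    _ ≤ _ := by nlinarith [mul_nonneg hu hw, mul_nonneg hu hr, mul_nonneg hw hr]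

/-- with `‖v‖_X = sup_{t∈[0,T]} ‖v(t,·)‖_{L²(0,L)} + ‖v_{xx}‖_{L²(Q_T)}`,
there is `C = C(L)` such that `‖v²‖_{L²(Q_T)} ≤ C (T^{1/2} + T^{1/4}) ‖v‖²_X`
for every `v ∈ X(Q_T)` (here realised by functions that are continuous in `(t,x)` and
twice differentiable in `x`, with `v_x = vx`, `v_{xx} = vxx`). -/
theorem stmt7 (L : ℝ) (hL : 0 < L) :
    ∃ C : ℝ, 0 < C ∧ ∀ T : ℝ, 0 < T → ∀ v vx vxx : ℝ → ℝ → ℝ,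
      Continuous (fun q : ℝ × ℝ => v q.1 q.2) →
      (∀ t ∈ Icc (0:ℝ) T, ∀ x ∈ Icc (0:ℝ) L, HasDerivAt (v t) (vx t x) x) →
      (∀ t ∈ Icc (0:ℝ) T, ∀ x ∈ Icc (0:ℝ) L, HasDerivAt (vx t) (vxx t x) x) →
      (∀ t ∈ Icc (0:ℝ) T, IntegrableOn (fun x => (vxx t x) ^ 2) (Ioc 0 L)) →
      IntegrableOn (fun q : ℝ × ℝ => (vxx q.1 q.2) ^ 2) (Ioc 0 T ×ˢ Ioc 0 L) →
      (∫ t in Ioc (0:ℝ) T, ∫ x in Ioc (0:ℝ) L, (v t x) ^ 4) ^ ((1:ℝ)/2)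
        ≤ C * (T ^ ((1:ℝ)/2) + T ^ ((1:ℝ)/4)) *
          ((⨆ t : Icc (0:ℝ) T, (∫ x in Ioc (0:ℝ) L, (v (t:ℝ) x) ^ 2) ^ ((1:ℝ)/2)) +
            (∫ t in Ioc (0:ℝ) T, ∫ x in Ioc (0:ℝ) L, (vxx t x) ^ 2) ^ ((1:ℝ)/2)) ^ 2 := by
  refine ⟨√(21 / L) + 2 * √L, by positivity,
    fun T hT v vx vxx hv_cont hv hvx hvxx hvxx_prod => ?_⟩
  have hT4 : T ^ ((1:ℝ)/4) = √√T := by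
    rw [Real.sqrt_eq_rpow, Real.sqrt_eq_rpow, ← Real.rpow_mul hT.le]; norm_num
  rw [hT4]
  simp only [← Real.sqrt_eq_rpow]
  set A := ⨆ t : Icc (0:ℝ) T, √(∫ x in Ioc (0:ℝ) L, v t x ^ 2)
  have hA : ∀ t ∈ Icc 0 T, √(∫ x in Ioc 0 L, v t x ^ 2) ≤ A := fun t ht =>
    sqrt_integral_sq_le_iSup hv_cont hL.le ht
  have hR : IntegrableOn (fun t => ∫ x in Ioc 0 L, vxx t x ^ 2) (Ioc 0 T) := by
    rw [IntegrableOn, Measure.volume_eq_prod, ← Measure.prod_restrict] at hvxx_prod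
    exact hvxx_prod.integral_prod_left
  calc √(∫ t in Ioc 0 T, ∫ x in Ioc 0 L, v t x ^ 4)
      ≤ √(21 * A ^ 4 / L * T +
          4 * L * A ^ 3 * (√T * √(∫ t in Ioc 0 T, ∫ x in Ioc 0 L, vxx t x ^ 2))) :=
        Real.sqrt_le_sqrt (setIntegral_integral_pow_four_le hL hT.le hv hvx hvxx hR hA)
    _ ≤ _ := sqrt_le_mul_sqrt_add_sqrt_sqrt hL hT.le
        ((Real.sqrt_nonneg _).trans (hA 0 ⟨le_rfl, hT.le⟩)) (Real.sqrt_nonneg _)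
end
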